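/- Let T be large, 2 ≤ x ≤ T, and m a natural number with x^m ≤ T / log T. Then for any complex numbers a(p), (1/T) ∫_T^{2T} |∑_{p ≤ x} a(p) p^{-1/2 - it}|^{2m} dt ≪ m! (∑_{p ≤ x} |a(p)|²/p)^m, with an absolute implied constant. -/

import Mathlib

/-!
Expanding the `m`-th power, `D(t)^m = ∑_{n ≤ x^m} b(n) n^{-1/2-it}`, where `b(n)` sums
`a(p₁)⋯a(pₘ)` over the tuples of primes with product `n`. By unique factorisation at most `m!`
tuples have a given product, so Cauchy–Schwarz gives `∑ |b(n)|²/n ≤ m! (∑ |a(p)|²/p)^m`.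
The mean value of `|∑_{n ≤ N} c(n) n^{-it}|²` over an interval of length `T` is at most
`(T + 4N(1 + log N)) ∑ |c(n)|²`: the diagonal contributes `T`, an off-diagonal pair at most
`2/|log(n/k)| ≤ 2N/|n - k|` times `(|c(n)|² + |c(k)|²)/2`, and the harmonic sum is `O(log N)`.
Since `N = x^m ≤ T/log T`, the off-diagonal terms are `O(T)`.
-/

open Finset Complex
open scoped Nat ComplexConjugate

theorem card_filter_prod_eq_le_factorial {m : ℕ} (Q : Finset (Fin m → ℕ))
    (hQ : ∀ q ∈ Q, ∀ i, (q i).Prime) (n : ℕ) : #{r ∈ Q | ∏ i, r i = n} ≤ m ! := by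
  classical
  have hperm : ∀ r ∈ Q, ∏ i, r i = n → (List.ofFn r).Perm n.primeFactorsList :=
    fun r hr hn => Nat.primeFactorsList_unique (by rw [List.prod_ofFn, hn])
      (by simpa [List.mem_ofFn] using hQ r hr)
  rcases {r ∈ Q | ∏ i, r i = n}.eq_empty_or_nonempty with hF | ⟨q₀, hq₀⟩
  · simp [hF]
  rw [mem_filter] at hq₀
  calc #{r ∈ Q | ∏ i, r i = n} = #({r ∈ Q | ∏ i, r i = n}.image List.ofFn) :=
        (card_image_of_injective _ List.ofFn_injective).symm
    _ ≤ #(List.ofFn q₀).permutations.toFinset := card_le_card fun l hl => by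
        obtain ⟨r, hr, rfl⟩ := mem_image.mp hl
        rw [mem_filter] at hr
        simpa [List.mem_permutations] using
          (hperm r hr.1 hr.2).trans (hperm q₀ hq₀.1 hq₀.2).symm
    _ ≤ m ! := (List.toFinset_card_le _).trans (by simp [List.length_permutations])

theorem Real.abs_sub_div_le_abs_log_sub {M x y : ℝ} (hx : 0 < x) (hy : 0 < y) (hxM : x ≤ M)
    (hyM : y ≤ M) : |x - y| / M ≤ |Real.log x - Real.log y| := by
  wlog hxy : y ≤ x generalizing x y
  · rw [abs_sub_comm, abs_sub_comm (Real.log x)]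
    exact this hy hx hyM hxM (by linarith)
  have hlog := Real.one_sub_inv_le_log_of_pos (div_pos hx hy)
  rw [Real.log_div hx.ne' hy.ne', inv_div] at hlog
  rw [abs_of_nonneg (sub_nonneg.2 hxy), abs_of_nonneg (by linarith [div_le_one_of_le₀ hxy hx.le])]
  calc (x - y) / M ≤ (x - y) / x := div_le_div_of_nonneg_left (sub_nonneg.2 hxy) hx hxM
    _ = 1 - y / x := by field_simp
    _ ≤ _ := hlog

theorem sum_inv_le_one_add_log {s : Finset ℕ} {M : ℕ} (g : ℕ → ℕ) (hg : ∀ k ∈ s, g k ∈ Icc 1 M)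
    (hinj : Set.InjOn g s) : ∑ k ∈ s, (g k : ℝ)⁻¹ ≤ 1 + Real.log M :=
  calc ∑ k ∈ s, (g k : ℝ)⁻¹ = ∑ d ∈ s.image g, (d : ℝ)⁻¹ :=
        (sum_image (f := fun d : ℕ => (d : ℝ)⁻¹) hinj).symm
    _ ≤ ∑ d ∈ Icc 1 M, (d : ℝ)⁻¹ :=
        sum_le_sum_of_subset_of_nonneg (image_subset_iff.2 hg) fun _ _ _ => by positivity
    _ = harmonic M := by rw [harmonic_eq_sum_Icc]; push_cast; rfl
    _ ≤ 1 + Real.log M := harmonic_le_one_add_log M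

theorem sum_inv_abs_sub_le {M n : ℕ} (hn : n ≤ M) :
    ∑ k ∈ (Icc 1 M).erase n, |(k : ℝ) - n|⁻¹ ≤ 2 * (1 + Real.log M) := by
  rw [← sum_filter_add_sum_filter_not _ (· < n), two_mul]
  gcongr ?_ + ?_
  · calc _ = ∑ k ∈ (Icc 1 M).erase n with k < n, ((n - k : ℕ) : ℝ)⁻¹ := by
          refine sum_congr rfl fun k hk => ?_
          have hkn : k < n := (mem_filter.mp hk).2
          rw [abs_of_neg (sub_neg.2 (by exact_mod_cast hkn)), neg_sub, Nat.cast_sub hkn.le]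
      _ ≤ _ := sum_inv_le_one_add_log _ (fun k hk => by simp at hk ⊢; omega)
          (fun k hk l hl h => by simp at hk hl h; omega)
  · calc _ = ∑ k ∈ (Icc 1 M).erase n with ¬ k < n, ((k - n : ℕ) : ℝ)⁻¹ := by
          refine sum_congr rfl fun k hk => ?_
          have hnk : n ≤ k := not_lt.mp (mem_filter.mp hk).2
          rw [abs_of_nonneg (sub_nonneg.2 (by exact_mod_cast hnk)), Nat.cast_sub hnk]
      _ ≤ _ := sum_inv_le_one_add_log _ (fun k hk => by simp at hk ⊢; omega)
          (fun k hk l hl h => by simp at hk hl h; omega)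

/-- `2/|0| = 0` in Lean, so the trivial bound `L` at `d = 0` needs its own case. -/
noncomputable def expIntegralBound (L d : ℝ) : ℝ := if d = 0 then L else 2 / |d|

theorem norm_integral_exp_le_expIntegralBound {a b : ℝ} (hab : a ≤ b) (d : ℝ) :
    ‖∫ t in a..b, exp (I * d * t)‖ ≤ expIntegralBound (b - a) d := by
  unfold expIntegralBound
  split_ifs with hd
  · simp only [hd, ofReal_zero, mul_zero, zero_mul, exp_zero, intervalIntegral.integral_const,
      real_smul, mul_one, norm_real, Real.norm_of_nonneg (sub_nonneg.2 hab), le_rfl]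
  have hunit : ∀ t : ℝ, ‖exp (I * d * t)‖ = 1 := fun t => by
    rw [norm_exp]; simp
  rw [integral_exp_mul_complex (mul_ne_zero I_ne_zero (ofReal_ne_zero.2 hd)), norm_div,
    norm_mul, norm_I, one_mul, norm_real, Real.norm_eq_abs]
  gcongr
  exact (norm_sub_le _ _).trans (by rw [hunit, hunit]; norm_num)

theorem sum_sum_mul_mul_le_of_symm {ι : Type*} (s : Finset ι) (u : ι → ℝ) (K : ι → ι → ℝ)
    (hK : ∀ i j, 0 ≤ K i j) (hsymm : ∀ i j, K i j = K j i) :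
    ∑ i ∈ s, ∑ j ∈ s, u i * u j * K i j ≤ ∑ i ∈ s, u i ^ 2 * ∑ j ∈ s, K i j := by
  calc ∑ i ∈ s, ∑ j ∈ s, u i * u j * K i j
      ≤ ∑ i ∈ s, ∑ j ∈ s, (u i ^ 2 * K i j + u j ^ 2 * K j i) / 2 := by
        gcongr with i _ j _
        rw [hsymm j i]
        nlinarith [mul_nonneg (sq_nonneg (u i - u j)) (hK i j)]
    _ = ∑ i ∈ s, u i ^ 2 * ∑ j ∈ s, K i j := by
        simp only [add_div, sum_add_distrib]
        rw [sum_comm (f := fun i j => u j ^ 2 * K j i / 2), ← sum_add_distrib]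
        simp only [mul_sum]
        refine sum_congr rfl fun i _ => ?_
        rw [← sum_add_distrib]
        exact sum_congr rfl fun j _ => by ring

theorem ofReal_norm_sum_mul_exp_sq {ι : Type*} (s : Finset ι) (c : ι → ℂ) (γ : ι → ℝ) (t : ℝ) :
    ((‖∑ i ∈ s, c i * exp (I * γ i * t)‖ ^ 2 : ℝ) : ℂ) =
      ∑ i ∈ s, ∑ j ∈ s, c i * conj (c j) * exp (I * ↑(γ i - γ j) * t) := by
  rw [ofReal_pow, ← mul_conj', map_sum, sum_mul_sum]
  refine sum_congr rfl fun i _ => sum_congr rfl fun j _ => ?_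
  rw [map_mul, ← exp_conj, mul_mul_mul_comm, ← exp_add]
  simp only [map_mul, conj_I, conj_ofReal]
  push_cast
  ring_nf

theorem integral_norm_sum_mul_exp_sq_le {ι : Type*} (s : Finset ι) (c : ι → ℂ) (γ : ι → ℝ)
    {a b : ℝ} (hab : a ≤ b) :
    ∫ t in a..b, ‖∑ i ∈ s, c i * exp (I * γ i * t)‖ ^ 2 ≤
      ∑ i ∈ s, ‖c i‖ ^ 2 * ∑ j ∈ s, expIntegralBound (b - a) (γ i - γ j) := by
  have hcont : ∀ i j, Continuous fun t : ℝ => c i * conj (c j) * exp (I * ↑(γ i - γ j) * t) :=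
    fun i j => by fun_prop
  calc ∫ t in a..b, ‖∑ i ∈ s, c i * exp (I * γ i * t)‖ ^ 2
      ≤ ‖((∫ t in a..b, ‖∑ i ∈ s, c i * exp (I * γ i * t)‖ ^ 2 : ℝ) : ℂ)‖ := by
        rw [norm_real]; exact Real.le_norm_self _
    _ = ‖∑ i ∈ s, ∑ j ∈ s, c i * conj (c j) * ∫ t in a..b, exp (I * ↑(γ i - γ j) * t)‖ := by
        rw [← intervalIntegral.integral_ofReal]
        simp_rw [ofReal_norm_sum_mul_exp_sq]
        rw [intervalIntegral.integral_finsetSum fun i _ =>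
          (continuous_finsetSum _ fun j _ => hcont i j).intervalIntegrable _ _]
        congr 1
        refine sum_congr rfl fun i _ => ?_
        rw [intervalIntegral.integral_finsetSum fun j _ => (hcont i j).intervalIntegrable _ _]
        exact sum_congr rfl fun j _ => intervalIntegral.integral_const_mul _ _
    _ ≤ ∑ i ∈ s, ∑ j ∈ s, ‖c i‖ * ‖c j‖ * expIntegralBound (b - a) (γ i - γ j) := by
        refine (norm_sum_le _ _).trans (sum_le_sum fun i _ => (norm_sum_le _ _).trans
          (sum_le_sum fun j _ => ?_))
        rw [norm_mul, norm_mul, norm_conj]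
        gcongr
        exact norm_integral_exp_le_expIntegralBound hab _
    _ ≤ _ := by
        refine sum_sum_mul_mul_le_of_symm s _ _ (fun i j => ?_) (fun i j => ?_)
        · unfold expIntegralBound; split_ifs <;> positivity
        · simp only [expIntegralBound, sub_eq_zero, eq_comm (a := γ i), abs_sub_comm]

theorem sum_expIntegralBound_log_sub_le (L : ℝ) {M n : ℕ} (hn : n ∈ Icc 1 M) :
    ∑ k ∈ Icc 1 M, expIntegralBound L (Real.log k - Real.log n) ≤
      L + 4 * M * (1 + Real.log M) := by
  obtain ⟨hn1, hnM⟩ := mem_Icc.mp hn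
  have hM : (0 : ℝ) < M := by exact_mod_cast hn1.trans hnM
  have hterm : ∀ k ∈ (Icc 1 M).erase n,
      expIntegralBound L (Real.log k - Real.log n) ≤ 2 * M * |(k : ℝ) - n|⁻¹ := by
    intro k hk
    obtain ⟨hkn, hk⟩ := mem_erase.mp hk
    obtain ⟨hk1, hkM⟩ := mem_Icc.mp hk
    have hk0 : (0 : ℝ) < k := by exact_mod_cast hk1
    have hn0 : (0 : ℝ) < n := by exact_mod_cast hn1
    have hdist : 0 < |(k : ℝ) - n| / M :=
      div_pos (abs_pos.2 (sub_ne_zero.2 (by exact_mod_cast hkn))) hM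
    have hgap := Real.abs_sub_div_le_abs_log_sub (M := M) hk0 hn0 (by exact_mod_cast hkM)
      (by exact_mod_cast hnM)
    rw [expIntegralBound, if_neg (abs_pos.1 (hdist.trans_le hgap))]
    calc 2 / |Real.log k - Real.log n| ≤ 2 / (|(k : ℝ) - n| / M) := by gcongr
      _ = 2 * M * |(k : ℝ) - n|⁻¹ := by field_simp
  rw [← add_sum_erase _ _ hn, sub_self, expIntegralBound, if_pos rfl]
  gcongr
  calc ∑ k ∈ (Icc 1 M).erase n, expIntegralBound L (Real.log k - Real.log n)
      ≤ ∑ k ∈ (Icc 1 M).erase n, 2 * M * |(k : ℝ) - n|⁻¹ := sum_le_sum hterm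
    _ ≤ 2 * M * (2 * (1 + Real.log M)) := by
        rw [← mul_sum]; gcongr; exact sum_inv_abs_sub_le hnM
    _ = 4 * M * (1 + Real.log M) := by ring

theorem integral_norm_sum_mul_cpow_sq_le (M : ℕ) (b : ℕ → ℂ) {T₁ T₂ : ℝ} (hT : T₁ ≤ T₂) :
    ∫ t in T₁..T₂, ‖∑ n ∈ Icc 1 M, b n * (n : ℂ) ^ (-(1 / 2 + I * t))‖ ^ 2 ≤
      (T₂ - T₁ + 4 * M * (1 + Real.log M)) * ∑ n ∈ Icc 1 M, ‖b n‖ ^ 2 / n := by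
  have hcpow : ∀ t : ℝ, ∀ n ∈ Icc 1 M, b n * (n : ℂ) ^ (-(1 / 2 + I * t)) =
      b n * (n : ℂ) ^ (-(1 / 2) : ℂ) * exp (I * ↑(-Real.log n) * t) := by
    intro t n hn
    have hn0 : (n : ℂ) ≠ 0 := Nat.cast_ne_zero.2 (Nat.one_le_iff_ne_zero.mp (mem_Icc.mp hn).1)
    rw [neg_add, cpow_add _ _ hn0, mul_assoc, cpow_def_of_ne_zero hn0 (-(I * t)), ← natCast_log]
    push_cast; ring_nf
  have hweight : ∀ n ∈ Icc 1 M, ‖b n * (n : ℂ) ^ (-(1 / 2) : ℂ)‖ ^ 2 = ‖b n‖ ^ 2 / n := by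
    intro n hn
    rw [norm_mul, mul_pow, norm_natCast_cpow_of_pos (mem_Icc.mp hn).1,
      ← Real.rpow_mul_natCast (Nat.cast_nonneg _)]
    norm_num [Real.rpow_neg_one, div_eq_mul_inv]
  simp_rw [fun t => sum_congr rfl (hcpow t)]
  refine (integral_norm_sum_mul_exp_sq_le _ _ _ hT).trans ?_
  rw [mul_sum]
  refine sum_le_sum fun n hn => ?_
  rw [hweight n hn, mul_comm]
  gcongr
  simp_rw [neg_sub_neg]
  exact sum_expIntegralBound_log_sub_le _ hn

theorem natCast_prod_cpow {ι : Type*} (s : Finset ι) (f : ι → ℕ) (z : ℂ) :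
    ((∏ i ∈ s, f i : ℕ) : ℂ) ^ z = ∏ i ∈ s, (f i : ℂ) ^ z := by
  classical
  induction s using Finset.induction with
  | empty => simp
  | insert i s hi ih =>
    rw [prod_insert hi, prod_insert hi, Nat.cast_mul, natCast_mul_natCast_cpow, ih]

noncomputable def powCoeff (P : Finset ℕ) (a : ℕ → ℂ) (m n : ℕ) : ℂ :=
  ∑ q ∈ Fintype.piFinset (fun _ : Fin m => P) with ∏ i, q i = n, ∏ i, a (q i)

theorem sum_mul_cpow_pow_eq {P N : Finset ℕ} (a : ℕ → ℂ) (m : ℕ) (s : ℂ)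
    (hN : ∀ q ∈ Fintype.piFinset (fun _ : Fin m => P), ∏ i, q i ∈ N) :
    (∑ p ∈ P, a p * (p : ℂ) ^ s) ^ m = ∑ n ∈ N, powCoeff P a m n * (n : ℂ) ^ s := by
  rw [← Fin.prod_const, prod_univ_sum, ← sum_fiberwise_of_maps_to hN]
  refine sum_congr rfl fun n _ => ?_
  rw [powCoeff, sum_mul]
  refine sum_congr rfl fun q hq => ?_
  rw [prod_mul_distrib, ← natCast_prod_cpow, (mem_filter.mp hq).2]

theorem norm_powCoeff_sq_le {P : Finset ℕ} (hP : ∀ p ∈ P, p.Prime) (a : ℕ → ℂ) (m n : ℕ) :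
    ‖powCoeff P a m n‖ ^ 2 ≤
      m ! * ∑ q ∈ Fintype.piFinset (fun _ : Fin m => P) with ∏ i, q i = n,
        ‖∏ i, a (q i)‖ ^ 2 := by
  have hcard := card_filter_prod_eq_le_factorial (Fintype.piFinset fun _ : Fin m => P)
    (fun q hq i => hP _ (Fintype.mem_piFinset.mp hq i)) n
  calc ‖powCoeff P a m n‖ ^ 2
      ≤ (∑ q ∈ Fintype.piFinset (fun _ : Fin m => P) with ∏ i, q i = n, ‖∏ i, a (q i)‖) ^ 2 := by
        gcongr; exact norm_sum_le _ _
    _ ≤ _ := sq_sum_le_card_mul_sum_sq.trans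
        (mul_le_mul_of_nonneg_right (by exact_mod_cast hcard) (by positivity))

theorem sum_norm_powCoeff_sq_div_le {P N : Finset ℕ} (hP : ∀ p ∈ P, p.Prime) (a : ℕ → ℂ)
    (m : ℕ) (hN : ∀ q ∈ Fintype.piFinset (fun _ : Fin m => P), ∏ i, q i ∈ N) :
    ∑ n ∈ N, ‖powCoeff P a m n‖ ^ 2 / n ≤ m ! * (∑ p ∈ P, ‖a p‖ ^ 2 / p) ^ m := by
  calc ∑ n ∈ N, ‖powCoeff P a m n‖ ^ 2 / n
      ≤ ∑ n ∈ N, m ! * ∑ q ∈ Fintype.piFinset (fun _ : Fin m => P) with ∏ i, q i = n,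
          ‖∏ i, a (q i)‖ ^ 2 / ((∏ i, q i : ℕ) : ℝ) := by
        gcongr with n
        calc ‖powCoeff P a m n‖ ^ 2 / n
            ≤ m ! * (∑ q ∈ Fintype.piFinset (fun _ : Fin m => P) with ∏ i, q i = n,
                ‖∏ i, a (q i)‖ ^ 2) / n := by gcongr; exact norm_powCoeff_sq_le hP a m n
          _ = _ := by
            rw [mul_div_assoc, sum_div]
            exact congrArg _ (sum_congr rfl fun q hq => by rw [(mem_filter.mp hq).2])
    _ = m ! * ∑ q ∈ Fintype.piFinset (fun _ : Fin m => P), ∏ i, ‖a (q i)‖ ^ 2 / q i := by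
        rw [← mul_sum, sum_fiberwise_of_maps_to hN]
        push_cast
        simp_rw [norm_prod, ← prod_pow, prod_div_distrib]
    _ = m ! * (∑ p ∈ P, ‖a p‖ ^ 2 / p) ^ m := by rw [← Fin.prod_const, prod_univ_sum]

theorem prod_mem_Icc_floor_pow {x : ℝ} (hx : 0 ≤ x) {m : ℕ} {q : Fin m → ℕ}
    (hq : ∀ i, q i ∈ filter Nat.Prime (range (⌊x⌋₊ + 1))) : ∏ i, q i ∈ Icc 1 ⌊x ^ m⌋₊ := by
  refine mem_Icc.2 ⟨one_le_prod' fun i _ => (mem_filter.1 (hq i)).2.one_le, Nat.le_floor ?_⟩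
  push_cast
  refine (prod_le_prod (fun i _ => by positivity) fun i _ => ?_).trans (Fin.prod_const m x).le
  exact (Nat.cast_le.2 (Nat.lt_succ_iff.1 (mem_range.1 (mem_filter.1 (hq i)).1))).trans
    (Nat.floor_le hx)

theorem mul_one_add_log_le_of_le_div_log {M T : ℝ} (hT : Real.exp 1 ≤ T) (hM : 1 ≤ M)
    (hMT : M ≤ T / Real.log T) : M * (1 + Real.log M) ≤ 2 * T := by
  have hT0 : 0 < T := (Real.exp_pos 1).trans_le hT
  have hlogT : 1 ≤ Real.log T := by rwa [Real.le_log_iff_exp_le hT0]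
  have hlogM : Real.log M ≤ Real.log T :=
    Real.log_le_log (by linarith) (hMT.trans (div_le_self hT0.le hlogT))
  calc M * (1 + Real.log M) ≤ T / Real.log T * (2 * Real.log T) := by
        gcongr
        · linarith [Real.log_nonneg hM]
        · linarith
    _ = 2 * T := by field_simp

/-- Soundararajan's moment bound: for `T` large, `2 ≤ x ≤ T` and `m` with
`x^m ≤ T/log T`, `(1/T)∫_T^{2T} |∑_{p ≤ x} a(p) p^{-1/2-it}|^{2m} dt
≪ m! (∑_{p ≤ x} |a(p)|²/p)^m` with an absolute implied constant. -/
theorem prime_dirichlet_polynomial_moments :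
    ∃ C T₀ : ℝ, 0 < C ∧ ∀ T x : ℝ, T₀ ≤ T → 2 ≤ x → x ≤ T → ∀ m : ℕ, 1 ≤ m →
      x ^ m ≤ T / Real.log T → ∀ a : ℕ → ℂ,
      (1 / T) * (∫ t in T..(2 * T),
          ‖∑ p ∈ Finset.filter Nat.Prime (Finset.range (⌊x⌋₊ + 1)),
            a p * (p : ℂ) ^ (-(1 / 2 + Complex.I * (t : ℂ)))‖ ^ (2 * m))
        ≤ C * (Nat.factorial m : ℝ) *
            (∑ p ∈ Finset.filter Nat.Prime (Finset.range (⌊x⌋₊ + 1)),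
              ‖a p‖ ^ 2 / p) ^ m := by
  refine ⟨9, 3, by norm_num, fun T x hT hx _ m _ hxm a => ?_⟩
  set P := filter Nat.Prime (range (⌊x⌋₊ + 1))
  set M := ⌊x ^ m⌋₊
  have hP : ∀ p ∈ P, p.Prime := fun p hp => (mem_filter.mp hp).2
  have hN : ∀ q ∈ Fintype.piFinset (fun _ : Fin m => P), ∏ i, q i ∈ Icc 1 M :=
    fun q hq => prod_mem_Icc_floor_pow (by linarith) (Fintype.mem_piFinset.mp hq)
  have hM : M * (1 + Real.log M) ≤ 2 * T := by
    refine mul_one_add_log_le_of_le_div_log (by linarith [Real.exp_one_lt_d9]) ?_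
      ((Nat.floor_le (by positivity)).trans hxm)
    exact_mod_cast Nat.le_floor (by simpa using one_le_pow₀ (by linarith : (1 : ℝ) ≤ x))
  have hmoment : ∀ t : ℝ, ‖∑ p ∈ P, a p * (p : ℂ) ^ (-(1 / 2 + I * t))‖ ^ (2 * m) =
      ‖∑ n ∈ Icc 1 M, powCoeff P a m n * (n : ℂ) ^ (-(1 / 2 + I * t))‖ ^ 2 := fun t => by
    rw [mul_comm 2 m, pow_mul, ← norm_pow, sum_mul_cpow_pow_eq a m _ hN]
  rw [intervalIntegral.integral_congr fun t _ => hmoment t]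
  calc 1 / T * ∫ t in T..(2 * T),
          ‖∑ n ∈ Icc 1 M, powCoeff P a m n * (n : ℂ) ^ (-(1 / 2 + I * t))‖ ^ 2
      ≤ 1 / T * ((2 * T - T + 4 * M * (1 + Real.log M)) *
          ∑ n ∈ Icc 1 M, ‖powCoeff P a m n‖ ^ 2 / n) := by
        gcongr
        exact integral_norm_sum_mul_cpow_sq_le M _ (by linarith)
    _ ≤ 1 / T * (9 * T * (m ! * (∑ p ∈ P, ‖a p‖ ^ 2 / p) ^ m)) := by
        gcongr
        · linarith
        · exact sum_norm_powCoeff_sq_div_le hP a m hN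
    _ = 9 * m ! * (∑ p ∈ P, ‖a p‖ ^ 2 / p) ^ m := by field_simp
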